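/- arXiv:math/0310356 — 4 statements merged into one kernel-verified Lean document; each statement's English description precedes it below -/
import Mathlib

section
/- Let G be a group with a length function ℓ, and let P be a real polynomial such that for every r ≥ 0 and all nonnegative f, g, h ∈ ℂG with the support of f contained in B_ℓ(e,r), one has (f*g*h)(e) ≤ P(r)·‖f‖₂·‖g‖₂·‖h‖₂. Then for every r ≥ 0 and every nonnegative f ∈ ℂG whose support is contained in B_ℓ(e,r), one has ‖f‖_* ≤ 2·P(r)·‖f‖₂. -/
/-! For nonnegative `f` one has `|f * g| ≤ f * |g|` pointwise, so it suffices to bound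
`p = f * |g|`. Testing the triple bound against `|g|` and `h = p*`, where
`p*(γ) = conj p(γ⁻¹)`, gives `‖p‖₂² = (f * |g| * p*)(e) ≤ P(r) ‖f‖₂ ‖g‖₂ ‖p‖₂`, hence
`‖f * g‖₂ ≤ ‖p‖₂ ≤ P(r) ‖f‖₂ ‖g‖₂`. The same test with `g = f*` and `h = δ_e` shows
`P(r) ‖f‖₂ ≥ 0`. -/

open scoped BigOperators ComplexOrder

/-- The ℓ²-norm of a finitely supported function `f : G → ℂ`. -/
noncomputable def l2norm {G : Type*} [Group G] (f : MonoidAlgebra ℂ G) : ℝ :=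
  Real.sqrt (∑ γ ∈ f.coeff.support, ‖f.coeff γ‖ ^ 2)

/-- The operator norm of left convolution by `f` on `ℓ²(G)`. -/
noncomputable def opNorm {G : Type*} [Group G] (f : MonoidAlgebra ℂ G) : ℝ :=
  sSup {c : ℝ | ∃ g : MonoidAlgebra ℂ G, l2norm g = 1 ∧ c = l2norm (f * g)}

/-- The weighted ℓ²-norm `‖f‖_{ℓ,s}`. -/
noncomputable def sobolevNorm {G : Type*} [Group G] (ℓ : G → ℝ) (s : ℝ)
    (f : MonoidAlgebra ℂ G) : ℝ :=
  Real.sqrt (∑ γ ∈ f.coeff.support, ‖f.coeff γ‖ ^ 2 * (1 + ℓ γ) ^ (2 * s))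

/-- `ℓ` is a length function on the group `G`. -/
def IsLengthFunction {G : Type*} [Group G] (ℓ : G → ℝ) : Prop :=
  ℓ 1 = 0 ∧ (∀ γ, 0 ≤ ℓ γ) ∧ (∀ γ : G, ℓ γ⁻¹ = ℓ γ) ∧ ∀ γ μ : G, ℓ (γ * μ) ≤ ℓ γ + ℓ μ

/-- `G` has property RD with respect to the length function `ℓ`. -/
def PropertyRD {G : Type*} [Group G] (ℓ : G → ℝ) : Prop :=
  ∃ C s : ℝ, 0 < C ∧ 0 < s ∧ ∀ f : MonoidAlgebra ℂ G, opNorm f ≤ C * sobolevNorm ℓ s f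

section NormCoeff

variable {M : Type*}

noncomputable def normCoeff (g : MonoidAlgebra ℂ M) : MonoidAlgebra ℂ M :=
  .ofCoeff (g.coeff.mapRange (fun z ↦ (‖z‖ : ℂ)) (by simp))

@[simp]
lemma coeff_normCoeff (g : MonoidAlgebra ℂ M) (γ : M) : (normCoeff g).coeff γ = ‖g.coeff γ‖ :=
  Finsupp.mapRange_apply (hf := by simp)

lemma normCoeff_nonneg (g : MonoidAlgebra ℂ M) : 0 ≤ (normCoeff g).coeff := fun γ ↦ by
  simp

lemma normCoeff_of_nonneg {f : MonoidAlgebra ℂ M} (hf : 0 ≤ f.coeff) : normCoeff f = f := by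
  ext γ
  simpa using (Complex.eq_coe_norm_of_nonneg (hf γ)).symm

end NormCoeff

section GroupAlgebra

variable {G : Type*} [Group G]

lemma l2norm_eq_sqrt_sum (f : MonoidAlgebra ℂ G) :
    l2norm f = √(f.coeff.sum fun _ z ↦ ‖z‖ ^ 2) := rfl

lemma l2norm_nonneg (f : MonoidAlgebra ℂ G) : 0 ≤ l2norm f := Real.sqrt_nonneg _

lemma l2norm_sq (f : MonoidAlgebra ℂ G) : l2norm f ^ 2 = ∑ γ ∈ f.coeff.support, ‖f.coeff γ‖ ^ 2 :=
  Real.sq_sqrt (by positivity)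

lemma l2norm_one : l2norm (1 : MonoidAlgebra ℂ G) = 1 := by
  simp [l2norm, MonoidAlgebra.one_def]

lemma l2norm_le_of_norm_coeff_le {p q : MonoidAlgebra ℂ G}
    (hpq : ∀ γ, ‖p.coeff γ‖ ≤ ‖q.coeff γ‖) : l2norm p ≤ l2norm q := by
  have hsupp : p.coeff.support ⊆ q.coeff.support := fun γ hγ ↦ by
    simpa using (norm_pos_iff.2 (Finsupp.mem_support_iff.1 hγ)).trans_le (hpq γ)
  refine Real.sqrt_le_sqrt ?_
  calc ∑ γ ∈ p.coeff.support, ‖p.coeff γ‖ ^ 2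
      ≤ ∑ γ ∈ p.coeff.support, ‖q.coeff γ‖ ^ 2 := by gcongr with γ; exact hpq γ
    _ ≤ ∑ γ ∈ q.coeff.support, ‖q.coeff γ‖ ^ 2 :=
      Finset.sum_le_sum_of_subset_of_nonneg hsupp fun _ _ _ ↦ by positivity

lemma l2norm_normCoeff (g : MonoidAlgebra ℂ G) : l2norm (normCoeff g) = l2norm g :=
  le_antisymm (l2norm_le_of_norm_coeff_le fun γ ↦ by simp)
    (l2norm_le_of_norm_coeff_le fun γ ↦ by simp)

lemma coeff_mul_nonneg {f g : MonoidAlgebra ℂ G} (hf : 0 ≤ f.coeff) (hg : 0 ≤ g.coeff) :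
    0 ≤ (f * g).coeff := fun γ ↦ by
  rw [MonoidAlgebra.coeff_mul_apply_left]
  exact Finset.sum_nonneg fun a _ ↦ mul_nonneg (hf a) (hg _)

lemma norm_coeff_mul_le (f g : MonoidAlgebra ℂ G) (γ : G) :
    ‖(f * g).coeff γ‖ ≤ ‖(normCoeff f * normCoeff g).coeff γ‖ := by
  have hnorm : (normCoeff f * normCoeff g).coeff γ
      = ((∑ a ∈ f.coeff.support, ‖f.coeff a‖ * ‖g.coeff (a⁻¹ * γ)‖ : ℝ) : ℂ) := by
    rw [MonoidAlgebra.coeff_mul_apply_left, normCoeff, MonoidAlgebra.coeff_ofCoeff,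
      Finsupp.sum_mapRange_index (by simp), Finsupp.sum]
    push_cast
    simp
  rw [hnorm, Complex.norm_real, Real.norm_of_nonneg (by positivity),
    MonoidAlgebra.coeff_mul_apply_left, Finsupp.sum]
  exact (norm_sum_le _ _).trans_eq (by simp)

noncomputable def conjInv (p : MonoidAlgebra ℂ G) : MonoidAlgebra ℂ G :=
  .ofCoeff ((p.coeff.mapRange star (star_zero _)).equivMapDomain (Equiv.inv G))

@[simp]
lemma coeff_conjInv (p : MonoidAlgebra ℂ G) (γ : G) :
    (conjInv p).coeff γ = star (p.coeff γ⁻¹) := rfl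

lemma conjInv_nonneg {p : MonoidAlgebra ℂ G} (hp : 0 ≤ p.coeff) : 0 ≤ (conjInv p).coeff :=
  fun γ ↦ star_nonneg_iff.2 (hp γ⁻¹)

lemma l2norm_conjInv (p : MonoidAlgebra ℂ G) : l2norm (conjInv p) = l2norm p := by
  rw [l2norm_eq_sqrt_sum, l2norm_eq_sqrt_sum, conjInv, MonoidAlgebra.coeff_ofCoeff,
    Finsupp.sum_equivMapDomain, Finsupp.sum_mapRange_index (by simp)]
  simp

lemma coeff_mul_conjInv_one (p : MonoidAlgebra ℂ G) :
    (p * conjInv p).coeff 1 = ((l2norm p ^ 2 : ℝ) : ℂ) := by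
  rw [MonoidAlgebra.coeff_mul_apply_left, l2norm_sq, Finsupp.sum]
  push_cast
  refine Finset.sum_congr rfl fun a _ ↦ ?_
  simpa using RCLike.mul_conj (p.coeff a)

lemma opNorm_le_of_l2norm_mul_le {f : MonoidAlgebra ℂ G} {c : ℝ} (hc : 0 ≤ c)
    (hf : ∀ g, l2norm (f * g) ≤ c * l2norm g) : opNorm f ≤ c := by
  refine Real.sSup_le ?_ hc
  rintro _ ⟨g, hg, rfl⟩
  simpa [hg] using hf g

end GroupAlgebra

def TripleBounded {G : Type*} [Group G] (C : ℝ) (f : MonoidAlgebra ℂ G) : Prop :=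
  ∀ g h : MonoidAlgebra ℂ G, 0 ≤ g.coeff → 0 ≤ h.coeff →
    (f * g * h).coeff 1 ≤ ((C * l2norm f * l2norm g * l2norm h : ℝ) : ℂ)

namespace TripleBounded

variable {G : Type*} [Group G] {C : ℝ} {f : MonoidAlgebra ℂ G}

lemma mul_l2norm_nonneg (hf : 0 ≤ f.coeff) (hC : TripleBounded C f) : 0 ≤ C * l2norm f := by
  have hsq : l2norm f * l2norm f ≤ C * l2norm f * l2norm f := by
    have := hC (conjInv f) 1 (conjInv_nonneg hf) (by simp [MonoidAlgebra.one_def])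
    rwa [mul_one, coeff_mul_conjInv_one, l2norm_conjInv, l2norm_one, mul_one,
      Complex.real_le_real, sq] at this
  rcases (l2norm_nonneg f).eq_or_lt with h0 | hpos
  · simp [← h0]
  · exact (l2norm_nonneg f).trans (le_of_mul_le_mul_right hsq hpos)

lemma l2norm_mul_le (hf : 0 ≤ f.coeff) (hC : TripleBounded C f) (g : MonoidAlgebra ℂ G) :
    l2norm (f * g) ≤ C * l2norm f * l2norm g := by
  set p := f * normCoeff g
  have hsq : l2norm p * l2norm p ≤ C * l2norm f * l2norm g * l2norm p := by
    have := hC (normCoeff g) (conjInv p) (normCoeff_nonneg g)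
      (conjInv_nonneg (coeff_mul_nonneg hf (normCoeff_nonneg g)))
    rwa [coeff_mul_conjInv_one, l2norm_normCoeff, l2norm_conjInv, Complex.real_le_real,
      sq] at this
  have hdom : l2norm (f * g) ≤ l2norm p := l2norm_le_of_norm_coeff_le fun γ ↦ by
    simpa [p, normCoeff_of_nonneg hf] using norm_coeff_mul_le f g γ
  refine hdom.trans ?_
  rcases (l2norm_nonneg p).eq_or_lt with h0 | hpos
  · rw [← h0]
    exact mul_nonneg (hC.mul_l2norm_nonneg hf) (l2norm_nonneg g)
  · exact le_of_mul_le_mul_right hsq hpos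

end TripleBounded

theorem triple_bound_implies_opnorm_bound_general {G : Type*} [Group G] (ℓ : G → ℝ)
    (P : Polynomial ℝ)
    (h : ∀ r : ℝ, 0 ≤ r → ∀ f g h' : MonoidAlgebra ℂ G,
      (∀ γ : G, 0 ≤ f.coeff γ) → (∀ γ : G, 0 ≤ g.coeff γ) → (∀ γ : G, 0 ≤ h'.coeff γ) →
      (∀ γ : G, f.coeff γ ≠ 0 → ℓ γ ≤ r) →
      (f * g * h').coeff 1 ≤ ((P.eval r * l2norm f * l2norm g * l2norm h' : ℝ) : ℂ)) :
    ∀ r : ℝ, 0 ≤ r → ∀ f : MonoidAlgebra ℂ G, (∀ γ : G, 0 ≤ f.coeff γ) →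
      (∀ γ : G, f.coeff γ ≠ 0 → ℓ γ ≤ r) → opNorm f ≤ 2 * P.eval r * l2norm f := by
  intro r hr f hf hball
  have hB : TripleBounded (P.eval r) f := fun g h' hg hh' ↦ h r hr f g h' hf hg hh' hball
  have hnonneg := hB.mul_l2norm_nonneg hf
  calc opNorm f ≤ P.eval r * l2norm f :=
        opNorm_le_of_l2norm_mul_le hnonneg fun g ↦ hB.l2norm_mul_le hf g
    _ ≤ 2 * P.eval r * l2norm f := by linarith

/-- If for all nonnegative `f, g, h ∈ ℂG` with `supp f ⊆ B_ℓ(e,r)` one has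
`(f*g*h)(e) ≤ P(r)·‖f‖₂·‖g‖₂·‖h‖₂`, then every nonnegative `f ∈ ℂG` supported in
`B_ℓ(e,r)` satisfies `‖f‖_* ≤ 2·P(r)·‖f‖₂`. -/
theorem triple_bound_implies_opnorm_bound {G : Type*} [Group G] (ℓ : G → ℝ)
    (hℓ : IsLengthFunction ℓ) (P : Polynomial ℝ)
    (h : ∀ r : ℝ, 0 ≤ r → ∀ f g h' : MonoidAlgebra ℂ G,
      (∀ γ : G, 0 ≤ f.coeff γ) → (∀ γ : G, 0 ≤ g.coeff γ) → (∀ γ : G, 0 ≤ h'.coeff γ) →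
      (∀ γ : G, f.coeff γ ≠ 0 → ℓ γ ≤ r) →
      (f * g * h').coeff 1 ≤ ((P.eval r * l2norm f * l2norm g * l2norm h' : ℝ) : ℂ)) :
    ∀ r : ℝ, 0 ≤ r → ∀ f : MonoidAlgebra ℂ G, (∀ γ : G, 0 ≤ f.coeff γ) →
      (∀ γ : G, f.coeff γ ≠ 0 → ℓ γ ≤ r) → opNorm f ≤ 2 * P.eval r * l2norm f :=
  triple_bound_implies_opnorm_bound_general ℓ P h
end

section
/- Let G be a group with a length function ℓ, and let P be a real polynomial such that for every r ≥ 0 the ball B_ℓ(e,r) is finite of cardinality at most P(r) (G has polynomial growth with respect to ℓ). Then for every r ≥ 0 and every f ∈ ℂG whose support is contained in B_ℓ(e,r), one has ‖f‖_* ≤ ‖f‖₁ ≤ √(P(r))·‖f‖₂; in particular G has property RD with respect to ℓ. -/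
open scoped BigOperators ComplexOrder

/-- The ℓ¹-norm of a finitely supported function `f : G → ℂ`. -/
noncomputable def l1norm {G : Type*} [Group G] (f : MonoidAlgebra ℂ G) : ℝ :=
  ∑ γ ∈ f.coeff.support, ‖f.coeff γ‖

/-!
Writing `f = ∑ μ, f(μ) δ_μ`, left convolution by `δ_μ` is an isometry of `ℓ²(G)`, so the
triangle inequality gives `‖f‖_* ≤ ‖f‖₁`, and Cauchy–Schwarz on a support of at most `P(r)`
points gives `‖f‖₁ ≤ √P(r) ‖f‖₂`. For property RD, Cauchy–Schwarz against the weights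
`(1 + ℓ)^{±s}` bounds `‖f‖₁` by `‖f‖_{ℓ,s} (∑_γ (1 + ℓ γ)^{-2s})^{1/2}`. With `2s = deg P + 2`
this last sum is uniformly bounded: for a constant `A`, the shell `m - 1 ≤ ℓ < m` has at most
`P(m) ≤ A m^{deg P}` elements, so it contributes at most `A / m²`, and `∑ 1/m² ≤ 2`.
-/

open Finset

section Norms

variable {G : Type*} [Group G]

lemma l2norm_eq_of_support_subset {f : MonoidAlgebra ℂ G} {T : Finset G}
    (h : f.coeff.support ⊆ T) : l2norm f = √(∑ γ ∈ T, ‖f.coeff γ‖ ^ 2) := by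
  unfold l2norm
  congr 1
  refine sum_subset h fun γ _ hγ => ?_
  simp [Finsupp.notMem_support_iff.mp hγ]

noncomputable def restrictEuclidean (T : Finset G) :
    MonoidAlgebra ℂ G →ₗ[ℂ] EuclideanSpace ℂ T where
  toFun f := WithLp.toLp 2 fun γ => f.coeff γ
  map_add' f g := by ext γ; exact Finsupp.add_apply f.coeff g.coeff γ
  map_smul' c f := by ext γ; exact Finsupp.smul_apply c f.coeff γ

lemma norm_restrictEuclidean {T : Finset G} {f : MonoidAlgebra ℂ G}
    (h : f.coeff.support ⊆ T) : ‖restrictEuclidean T f‖ = l2norm f := by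
  rw [l2norm_eq_of_support_subset h, EuclideanSpace.norm_eq, ← sum_attach T]
  rfl

lemma l2norm_sum_le {ι : Type*} (s : Finset ι) (f : ι → MonoidAlgebra ℂ G) :
    l2norm (∑ i ∈ s, f i) ≤ ∑ i ∈ s, l2norm (f i) := by
  classical
  set T := s.biUnion fun i => (f i).coeff.support
  have hsum : (∑ i ∈ s, f i).coeff.support ⊆ T := by
    rw [MonoidAlgebra.coeff_sum]
    exact Finsupp.support_finsetSum
  rw [← norm_restrictEuclidean hsum, map_sum]
  refine (norm_sum_le _ _).trans_eq (sum_congr rfl fun i hi => ?_)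
  exact norm_restrictEuclidean fun γ hγ => mem_biUnion.mpr ⟨i, hi, hγ⟩

lemma l2norm_single_mul (μ : G) (c : ℂ) (g : MonoidAlgebra ℂ G) :
    l2norm (MonoidAlgebra.single μ c * g) = ‖c‖ * l2norm g := by
  classical
  have hsupp : (MonoidAlgebra.single μ c * g).coeff.support ⊆
      g.coeff.support.map (mulLeftEmbedding μ) := by
    intro γ hγ
    rw [Finsupp.mem_support_iff, MonoidAlgebra.coeff_single_mul_apply] at hγ
    exact mem_map.mpr ⟨μ⁻¹ * γ, Finsupp.mem_support_iff.mpr (right_ne_zero_of_mul hγ),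
      mul_inv_cancel_left μ γ⟩
  rw [l2norm_eq_of_support_subset hsupp, sum_map]
  simp only [mulLeftEmbedding_apply, MonoidAlgebra.coeff_single_mul_apply, inv_mul_cancel_left,
    norm_mul, mul_pow, ← mul_sum]
  rw [Real.sqrt_mul (by positivity), Real.sqrt_sq (norm_nonneg c), l2norm]

lemma opNorm_le_l1norm (f : MonoidAlgebra ℂ G) : opNorm f ≤ l1norm f := by
  refine Real.sSup_le ?_ (sum_nonneg fun _ _ => norm_nonneg _)
  rintro _ ⟨g, hg, rfl⟩
  calc l2norm (f * g)
      = l2norm (∑ μ ∈ f.coeff.support, MonoidAlgebra.single μ (f.coeff μ) * g) := by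
        rw [← sum_mul, ← Finsupp.sum, MonoidAlgebra.sum_coeff_single]
    _ ≤ ∑ μ ∈ f.coeff.support, l2norm (MonoidAlgebra.single μ (f.coeff μ) * g) :=
        l2norm_sum_le _ _
    _ = l1norm f := by simp only [l2norm_single_mul, hg, mul_one, l1norm]

lemma l1norm_le_sqrt_card_mul_l2norm (f : MonoidAlgebra ℂ G) :
    l1norm f ≤ √(#f.coeff.support) * l2norm f := by
  have h := Real.sum_mul_le_sqrt_mul_sqrt f.coeff.support (fun γ => 1) (fun γ => ‖f.coeff γ‖)
  simpa [l1norm, l2norm] using h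

lemma l1norm_le_sobolevNorm_mul {ℓ : G → ℝ} (hℓ : ∀ γ, 0 ≤ ℓ γ) (s : ℝ)
    (f : MonoidAlgebra ℂ G) :
    l1norm f ≤ sobolevNorm ℓ s f * √(∑ γ ∈ f.coeff.support, ((1 + ℓ γ) ^ (2 * s))⁻¹) := by
  have hpos : ∀ γ, 0 < 1 + ℓ γ := fun γ => by linarith [hℓ γ]
  have hsq : ∀ γ, ((1 + ℓ γ) ^ s) ^ 2 = (1 + ℓ γ) ^ (2 * s) := fun γ => by
    rw [← Real.rpow_mul_natCast (hpos γ).le, Nat.cast_ofNat, mul_comm]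
  have h := Real.sum_mul_le_sqrt_mul_sqrt f.coeff.support
    (fun γ => ‖f.coeff γ‖ * (1 + ℓ γ) ^ s) (fun γ => ((1 + ℓ γ) ^ s)⁻¹)
  simp only [mul_pow, inv_pow, hsq, mul_assoc,
    mul_inv_cancel₀ (Real.rpow_pos_of_pos (hpos _) s).ne', mul_one] at h
  exact h

end Norms

lemma card_le_of_forall_le {α : Type*} {ℓ : α → ℝ} {r b : ℝ}
    (hball : {a | ℓ a ≤ r}.Finite ∧ ({a | ℓ a ≤ r}.ncard : ℝ) ≤ b)
    {T : Finset α} (hT : ∀ a ∈ T, ℓ a ≤ r) : (#T : ℝ) ≤ b := by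
  refine le_trans ?_ hball.2
  rw [← Set.ncard_coe_finset]
  exact_mod_cast Set.ncard_le_ncard (fun a ha => hT a ha) hball.1

lemma Polynomial.eval_le_sum_abs_coeff_mul_pow (P : Polynomial ℝ) {x : ℝ} (hx : 1 ≤ x) :
    P.eval x ≤ (∑ i ∈ range (P.natDegree + 1), |P.coeff i|) * x ^ P.natDegree := by
  rw [eval_eq_sum_range, sum_mul]
  refine sum_le_sum fun i hi => ?_
  gcongr
  · exact le_abs_self _
  · exact mem_range_succ_iff.mp hi

section Shells

variable {α : Type*} {ℓ : α → ℝ} {A : ℝ} {d : ℕ}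

lemma sum_shell_inv_one_add_pow_le (hℓ : ∀ a, 0 ≤ ℓ a)
    (hgrowth : ∀ r : ℝ, 1 ≤ r → ∀ T : Finset α, (∀ a ∈ T, ℓ a ≤ r) → (#T : ℝ) ≤ A * r ^ d)
    (S : Finset α) {m : ℕ} (hm : 0 < m) :
    ∑ a ∈ S with ⌊ℓ a⌋₊ + 1 = m, ((1 + ℓ a) ^ (d + 2))⁻¹ ≤ A * ((m : ℝ) ^ 2)⁻¹ := by
  have hshell : ∀ a ∈ S.filter (⌊ℓ ·⌋₊ + 1 = m), ℓ a ≤ m ∧ (m : ℝ) ≤ 1 + ℓ a := by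
    intro a ha
    have hfl := (mem_filter.mp ha).2
    have hlt := Nat.lt_floor_add_one (ℓ a)
    have hle := Nat.floor_le (hℓ a)
    rw [← hfl]
    push_cast
    constructor <;> linarith
  have hm' : (0 : ℝ) < m := by exact_mod_cast hm
  calc ∑ a ∈ S with ⌊ℓ a⌋₊ + 1 = m, ((1 + ℓ a) ^ (d + 2))⁻¹
      ≤ #(S.filter (⌊ℓ ·⌋₊ + 1 = m)) * ((m : ℝ) ^ (d + 2))⁻¹ := by
        rw [← nsmul_eq_mul]
        refine sum_le_card_nsmul _ _ _ fun a ha => ?_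
        exact inv_anti₀ (by positivity) (pow_le_pow_left₀ hm'.le (hshell a ha).2 _)
    _ ≤ A * (m : ℝ) ^ d * ((m : ℝ) ^ (d + 2))⁻¹ := by
        gcongr
        exact hgrowth m (by exact_mod_cast hm) _ fun a ha => (hshell a ha).1
    _ = A * ((m : ℝ) ^ 2)⁻¹ := by
        rw [pow_add, mul_inv, ← mul_assoc, mul_assoc A, mul_inv_cancel₀ (by positivity), mul_one]

lemma sum_inv_one_add_pow_le (hℓ : ∀ a, 0 ≤ ℓ a)
    (hgrowth : ∀ r : ℝ, 1 ≤ r → ∀ T : Finset α, (∀ a ∈ T, ℓ a ≤ r) → (#T : ℝ) ≤ A * r ^ d)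
    (S : Finset α) : ∑ a ∈ S, ((1 + ℓ a) ^ (d + 2))⁻¹ ≤ 2 * A := by
  classical
  have hA : 0 ≤ A := by simpa using hgrowth 1 le_rfl ∅ (by simp)
  set N := S.sup fun a => ⌊ℓ a⌋₊ + 1
  have hmaps : ∀ a ∈ S, ⌊ℓ a⌋₊ + 1 ∈ Ioo 0 (N + 1) := fun a ha =>
    mem_Ioo.mpr ⟨Nat.succ_pos _, Nat.lt_succ_of_le (le_sup (f := fun a => ⌊ℓ a⌋₊ + 1) ha)⟩
  rw [← sum_fiberwise_of_maps_to hmaps]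
  calc ∑ m ∈ Ioo 0 (N + 1), ∑ a ∈ S with ⌊ℓ a⌋₊ + 1 = m, ((1 + ℓ a) ^ (d + 2))⁻¹
      ≤ ∑ m ∈ Ioo 0 (N + 1), A * ((m : ℝ) ^ 2)⁻¹ := sum_le_sum fun m hm =>
        sum_shell_inv_one_add_pow_le hℓ hgrowth S (mem_Ioo.mp hm).1
    _ = A * ∑ m ∈ Ioo 0 (N + 1), ((m : ℝ) ^ 2)⁻¹ := (mul_sum _ _ _).symm
    _ ≤ A * 2 := by
        gcongr
        simpa using sum_Ioo_inv_sq_le (α := ℝ) 0 (N + 1)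
    _ = 2 * A := mul_comm _ _

end Shells

/-- If `G` has polynomial growth with respect to `ℓ`, i.e. every ball
`B_ℓ(e,r)` is finite with cardinality at most `P(r)`, then every `f ∈ ℂG` supported in
`B_ℓ(e,r)` satisfies `‖f‖_* ≤ ‖f‖₁ ≤ √(P(r))·‖f‖₂`; in particular `G` has property RD
with respect to `ℓ`. -/
theorem polynomial_growth_implies_rd {G : Type*} [Group G] (ℓ : G → ℝ)
    (hℓ : IsLengthFunction ℓ) (P : Polynomial ℝ)
    (hgrowth : ∀ r : ℝ, 0 ≤ r → {γ : G | ℓ γ ≤ r}.Finite ∧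
      ({γ : G | ℓ γ ≤ r}.ncard : ℝ) ≤ P.eval r) :
    (∀ r : ℝ, 0 ≤ r → ∀ f : MonoidAlgebra ℂ G, (∀ γ : G, f.coeff γ ≠ 0 → ℓ γ ≤ r) →
      opNorm f ≤ l1norm f ∧ l1norm f ≤ Real.sqrt (P.eval r) * l2norm f) ∧
    PropertyRD ℓ := by
  obtain ⟨hℓ_one, hℓ_nonneg, -, -⟩ := hℓ
  refine ⟨fun r hr f hf => ⟨opNorm_le_l1norm f, ?_⟩, ?_⟩
  · refine (l1norm_le_sqrt_card_mul_l2norm f).trans ?_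
    refine mul_le_mul_of_nonneg_right (Real.sqrt_le_sqrt ?_) (Real.sqrt_nonneg _)
    exact card_le_of_forall_le (hgrowth r hr) fun γ hγ => hf γ (Finsupp.mem_support_iff.mp hγ)
  set d := P.natDegree
  set A := ∑ i ∈ range (d + 1), |P.coeff i|
  have hball : ∀ r : ℝ, 1 ≤ r → ∀ T : Finset G, (∀ γ ∈ T, ℓ γ ≤ r) → (#T : ℝ) ≤ A * r ^ d :=
    fun r hr T hT => (card_le_of_forall_le (hgrowth r (by linarith)) hT).trans
      (P.eval_le_sum_abs_coeff_mul_pow hr)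
  have hA : 1 ≤ A := by simpa using hball 1 le_rfl {1} (by simp [hℓ_one])
  set s : ℝ := ((d : ℝ) + 2) / 2
  have hs : 2 * s = ((d + 2 : ℕ) : ℝ) := by push_cast; ring
  refine ⟨√(2 * A), s, by positivity, by positivity, fun f => ?_⟩
  calc opNorm f ≤ l1norm f := opNorm_le_l1norm f
    _ ≤ sobolevNorm ℓ s f * √(∑ γ ∈ f.coeff.support, ((1 + ℓ γ) ^ (d + 2))⁻¹) := by
        simpa only [hs, Real.rpow_natCast] using l1norm_le_sobolevNorm_mul hℓ_nonneg s f
    _ ≤ sobolevNorm ℓ s f * √(2 * A) := mul_le_mul_of_nonneg_left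
        (Real.sqrt_le_sqrt (sum_inv_one_add_pow_le hℓ_nonneg hball _)) (Real.sqrt_nonneg _)
    _ = √(2 * A) * sobolevNorm ℓ s f := mul_comm _ _
end

section
/- Let G be a group with a length function ℓ. Suppose that ‖f‖_* = ‖f‖₁ for every nonnegative f ∈ ℂG (Kesten's characterization: this holds exactly when G is amenable), and suppose there is a real polynomial P such that for every r ≥ 0 and every nonnegative f ∈ ℂG whose support is contained in B_ℓ(e,r), one has ‖f‖_* ≤ P(r)·‖f‖₂. Then for every r ≥ 0 the ball B_ℓ(e,r) is finite with cardinality at most P(r)²; that is, G has polynomial growth with respect to ℓ, with growth bounded by P². -/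
open scoped BigOperators ComplexOrder

/-
Test the two hypotheses on the indicator function `1_s` of a finite subset `s` of the ball of
radius `r`: Kesten's condition gives `‖1_s‖_* = ‖1_s‖₁ = |s|`, while the polynomial bound gives
`‖1_s‖_* ≤ P(r) ‖1_s‖₂ = P(r) √|s|`. Hence `|s| ≤ P(r)²` for every such `s`, so the ball is finite.
-/

theorem Set.finite_and_ncard_le_of_forall_finset_card_le {α : Type*} {S : Set α} {N : ℝ}
    (h : ∀ s : Finset α, ↑s ⊆ S → (s.card : ℝ) ≤ N) : S.Finite ∧ (S.ncard : ℝ) ≤ N := by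
  have hS : S.Finite := by
    by_contra hinf
    obtain ⟨t, htS, htcard⟩ := Set.Infinite.exists_subset_card_eq hinf (⌊N⌋₊ + 1)
    have := h t htS
    rw [htcard] at this
    exact (Nat.lt_floor_add_one N).not_ge (by exact_mod_cast this)
  refine ⟨hS, ?_⟩
  rw [Set.ncard_eq_toFinset_card S hS]
  exact h hS.toFinset (by simp)

theorem Real.le_sq_of_le_mul_sqrt {x c : ℝ} (hx : 0 ≤ x) (h : x ≤ c * √x) : x ≤ c ^ 2 := by
  rcases hx.eq_or_lt with rfl | hx
  · positivity
  have hsqrt : 0 < √x := Real.sqrt_pos.2 hx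
  have hle : √x ≤ c := by
    refine le_of_mul_le_mul_right ?_ hsqrt
    rwa [Real.mul_self_sqrt hx.le]
  calc x = √x ^ 2 := (Real.sq_sqrt hx.le).symm
    _ ≤ c ^ 2 := pow_le_pow_left₀ hsqrt.le hle 2

namespace MonoidAlgebra

variable {G : Type*}

open Classical in
noncomputable def finsetIndicator (s : Finset G) : MonoidAlgebra ℂ G :=
  ofCoeff ⟨s, fun γ => if γ ∈ s then 1 else 0, fun γ => by by_cases hγ : γ ∈ s <;> simp [hγ]⟩

variable (s : Finset G)

open Classical in
theorem coeff_finsetIndicator (γ : G) :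
    (finsetIndicator s).coeff γ = if γ ∈ s then 1 else 0 := rfl

theorem support_coeff_finsetIndicator : (finsetIndicator s).coeff.support = s := rfl

theorem norm_coeff_finsetIndicator {γ : G} (hγ : γ ∈ s) : ‖(finsetIndicator s).coeff γ‖ = 1 := by
  simp [coeff_finsetIndicator, hγ]

theorem coeff_finsetIndicator_nonneg (γ : G) : 0 ≤ (finsetIndicator s).coeff γ := by
  rw [coeff_finsetIndicator]
  split_ifs <;> norm_num

theorem l1norm_finsetIndicator [Group G] : l1norm (finsetIndicator s) = s.card := by
  rw [l1norm, support_coeff_finsetIndicator,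
    Finset.sum_congr rfl fun _ ↦ norm_coeff_finsetIndicator s]
  simp

theorem l2norm_finsetIndicator [Group G] : l2norm (finsetIndicator s) = √s.card := by
  rw [l2norm, support_coeff_finsetIndicator,
    Finset.sum_congr rfl fun γ hγ ↦ by rw [norm_coeff_finsetIndicator s hγ, one_pow]]
  simp

end MonoidAlgebra

open MonoidAlgebra in
theorem card_le_sq_of_opNorm_le_mul_l2norm {G : Type*} [Group G] (ℓ : G → ℝ)
    (hKesten : ∀ f : MonoidAlgebra ℂ G, (∀ γ : G, 0 ≤ f.coeff γ) → opNorm f = l1norm f)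
    (r C : ℝ)
    (h : ∀ f : MonoidAlgebra ℂ G, (∀ γ : G, 0 ≤ f.coeff γ) →
      (∀ γ : G, f.coeff γ ≠ 0 → ℓ γ ≤ r) → opNorm f ≤ C * l2norm f)
    (s : Finset G) (hs : ∀ γ ∈ s, ℓ γ ≤ r) : (s.card : ℝ) ≤ C ^ 2 := by
  have hsupp (γ : G) (hγ : (finsetIndicator s).coeff γ ≠ 0) : ℓ γ ≤ r :=
    hs γ (by rwa [← support_coeff_finsetIndicator s, Finsupp.mem_support_iff])
  have hbound := h _ (coeff_finsetIndicator_nonneg s) hsupp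
  rw [hKesten _ (coeff_finsetIndicator_nonneg s), l1norm_finsetIndicator,
    l2norm_finsetIndicator] at hbound
  exact Real.le_sq_of_le_mul_sqrt (Nat.cast_nonneg _) hbound

theorem amenable_rd_implies_polynomial_growth_general {G : Type*} [Group G] (ℓ : G → ℝ)
    (hKesten : ∀ f : MonoidAlgebra ℂ G, (∀ γ : G, 0 ≤ f.coeff γ) → opNorm f = l1norm f)
    (P : Polynomial ℝ)
    (h : ∀ r : ℝ, 0 ≤ r → ∀ f : MonoidAlgebra ℂ G, (∀ γ : G, 0 ≤ f.coeff γ) →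
      (∀ γ : G, f.coeff γ ≠ 0 → ℓ γ ≤ r) → opNorm f ≤ P.eval r * l2norm f) :
    ∀ r : ℝ, 0 ≤ r → {γ : G | ℓ γ ≤ r}.Finite ∧
      ({γ : G | ℓ γ ≤ r}.ncard : ℝ) ≤ (P.eval r) ^ 2 := fun r hr ↦
  Set.finite_and_ncard_le_of_forall_finset_card_le fun s hs ↦
    card_le_sq_of_opNorm_le_mul_l2norm ℓ hKesten r _ (h r hr) s fun _ hγ ↦ hs hγ

/-- If `‖f‖_* = ‖f‖₁` for every nonnegative `f ∈ ℂG` (Kesten's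
characterization of amenability) and there is a polynomial `P` such that every
nonnegative `f ∈ ℂG` supported in `B_ℓ(e,r)` satisfies `‖f‖_* ≤ P(r)·‖f‖₂`, then every
ball `B_ℓ(e,r)` is finite with cardinality at most `P(r)²`. -/
theorem amenable_rd_implies_polynomial_growth {G : Type*} [Group G] (ℓ : G → ℝ)
    (hℓ : IsLengthFunction ℓ)
    (hKesten : ∀ f : MonoidAlgebra ℂ G, (∀ γ : G, 0 ≤ f.coeff γ) → opNorm f = l1norm f)
    (P : Polynomial ℝ)
    (h : ∀ r : ℝ, 0 ≤ r → ∀ f : MonoidAlgebra ℂ G, (∀ γ : G, 0 ≤ f.coeff γ) →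
      (∀ γ : G, f.coeff γ ≠ 0 → ℓ γ ≤ r) → opNorm f ≤ P.eval r * l2norm f) :
    ∀ r : ℝ, 0 ≤ r → {γ : G | ℓ γ ≤ r}.Finite ∧
      ({γ : G | ℓ γ ≤ r}.ncard : ℝ) ≤ (P.eval r) ^ 2 :=
  amenable_rd_implies_polynomial_growth_general ℓ hKesten P h
end

section
/- Let G be a group with a length function ℓ such that ℓ(γ) = 0 only for γ = e (for example the word length of a finitely generated group), so that d(x,y) = ℓ(x⁻¹y) is a left-invariant metric on G, and suppose there is a real polynomial P with |B_ℓ(e,r)| ≤ P(r) for all r ≥ 0. Define C(x,y) = B̄(x, d(x,y)) ∪ B̄(y, d(x,y)), where B̄(x,r) = {t ∈ G : d(x,t) ≤ r}. Then C is G-equivariant (C(γx,γy) = γ·C(x,y)) and satisfies: (i) for all x, y, z ∈ G, the intersection C(x,y) ∩ C(y,z) ∩ C(z,x) is nonempty; (ii) for all x, y ∈ G and r ≥ 0, the set C(x,y) ∩ B̄(x,r) is finite with cardinality at most 2·P(r); (iii) if d(x,y) ≤ r then the diameter of C(x,y) is at most 4r. -/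
open scoped BigOperators ComplexOrder

/-- The left-invariant (pseudo-)distance associated to a length function. -/
def lengthDist {G : Type*} [Group G] (ℓ : G → ℝ) (x y : G) : ℝ := ℓ (x⁻¹ * y)

/-- The set `C(x,y) = B̄(x, d(x,y)) ∪ B̄(y, d(x,y))` in the polynomial growth case. -/
def growthC {G : Type*} [Group G] (ℓ : G → ℝ) (x y : G) : Set G :=
  {t : G | lengthDist ℓ x t ≤ lengthDist ℓ x y} ∪
    {t : G | lengthDist ℓ y t ≤ lengthDist ℓ x y}

/-!
The triangle inequality does all the work. Of the three points `x, y, z`, the vertex `z`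
lies in `C(x,y)` as soon as `d(y,z) ≤ d(x,y)`, and otherwise `x` lies in `C(y,z)`; the
remaining memberships hold because every point is the centre of one of its two balls.
The set `C(x,y) ∩ B̄(x,r)` sits inside the translate `x · B_ℓ(e,r)`, which has at most
`P(r)` elements, and every point of `C(x,y)` is within `2 d(x,y)` of `x`.
-/

section LengthDist

variable {G : Type*} [Group G] {ℓ : G → ℝ}

theorem lengthDist_mul_mul (ℓ : G → ℝ) (γ x y : G) :
    lengthDist ℓ (γ * x) (γ * y) = lengthDist ℓ x y := by
  simp only [lengthDist, mul_inv_rev, mul_assoc, inv_mul_cancel_left]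

theorem setOf_lengthDist_le (ℓ : G → ℝ) (x : G) (r : ℝ) :
    {t : G | lengthDist ℓ x t ≤ r} = (x * ·) '' {γ : G | ℓ γ ≤ r} := by
  rw [Set.image_mul_left]
  rfl

theorem ncard_setOf_lengthDist_le (ℓ : G → ℝ) (x : G) (r : ℝ) :
    {t : G | lengthDist ℓ x t ≤ r}.ncard = {γ : G | ℓ γ ≤ r}.ncard := by
  rw [setOf_lengthDist_le, Set.ncard_image_of_injective _ (mul_right_injective x)]

theorem finite_setOf_lengthDist_le {r : ℝ} (x : G) (h : {γ : G | ℓ γ ≤ r}.Finite) :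
    {t : G | lengthDist ℓ x t ≤ r}.Finite := by
  rw [setOf_lengthDist_le]
  exact h.image _

namespace IsLengthFunction

variable (hℓ : IsLengthFunction ℓ)
include hℓ

theorem lengthDist_nonneg (x y : G) : 0 ≤ lengthDist ℓ x y :=
  hℓ.2.1 _

theorem lengthDist_self (x : G) : lengthDist ℓ x x = 0 := by
  rw [lengthDist, inv_mul_cancel, hℓ.1]

theorem lengthDist_comm (x y : G) : lengthDist ℓ x y = lengthDist ℓ y x := by
  rw [lengthDist, lengthDist, ← hℓ.2.2.1, mul_inv_rev, inv_inv]

theorem lengthDist_triangle (x y z : G) :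
    lengthDist ℓ x z ≤ lengthDist ℓ x y + lengthDist ℓ y z := by
  simpa only [lengthDist, mul_assoc, mul_inv_cancel_left] using hℓ.2.2.2 (x⁻¹ * y) (y⁻¹ * z)

end IsLengthFunction

end LengthDist

section GrowthC

variable {G : Type*} [Group G] {ℓ : G → ℝ}

theorem growthC_mul_mul (ℓ : G → ℝ) (γ x y : G) :
    growthC ℓ (γ * x) (γ * y) = (γ * ·) '' growthC ℓ x y := by
  ext t
  rw [Set.image_mul_left]
  simp only [growthC, Set.mem_preimage, Set.mem_union, Set.mem_ofPred_eq]
  rw [← lengthDist_mul_mul ℓ γ x, ← lengthDist_mul_mul ℓ γ y, ← lengthDist_mul_mul ℓ γ x y,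
    mul_inv_cancel_left]

theorem mem_growthC_of_lengthDist_le {x y z : G} (h : lengthDist ℓ y z ≤ lengthDist ℓ x y) :
    z ∈ growthC ℓ x y :=
  Or.inr h

namespace IsLengthFunction

variable (hℓ : IsLengthFunction ℓ)
include hℓ

theorem left_mem_growthC (x y : G) : x ∈ growthC ℓ x y :=
  Or.inl <| (hℓ.lengthDist_self x).trans_le (hℓ.lengthDist_nonneg x y)

theorem right_mem_growthC (x y : G) : y ∈ growthC ℓ x y :=
  Or.inr <| (hℓ.lengthDist_self y).trans_le (hℓ.lengthDist_nonneg x y)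

theorem growthC_inter_nonempty (x y z : G) :
    (growthC ℓ x y ∩ growthC ℓ y z ∩ growthC ℓ z x).Nonempty := by
  by_cases hyz : lengthDist ℓ y z ≤ lengthDist ℓ x y
  · exact ⟨z, ⟨mem_growthC_of_lengthDist_le hyz, hℓ.right_mem_growthC y z⟩,
      hℓ.left_mem_growthC z x⟩
  · have hyx : lengthDist ℓ y x ≤ lengthDist ℓ y z :=
      (hℓ.lengthDist_comm y x).trans_le (le_of_not_ge hyz)
    exact ⟨x, ⟨hℓ.left_mem_growthC x y, Or.inl hyx⟩, hℓ.right_mem_growthC z x⟩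

theorem lengthDist_le_two_mul_of_mem_growthC {x y u : G} (hu : u ∈ growthC ℓ x y) :
    lengthDist ℓ x u ≤ 2 * lengthDist ℓ x y := by
  have hxy := hℓ.lengthDist_nonneg x y
  rcases hu with (hu : lengthDist ℓ x u ≤ _) | (hu : lengthDist ℓ y u ≤ _)
  · linarith
  · linarith [hℓ.lengthDist_triangle x y u]

theorem lengthDist_le_four_mul_of_mem_growthC {x y s t : G} (hs : s ∈ growthC ℓ x y)
    (ht : t ∈ growthC ℓ x y) : lengthDist ℓ s t ≤ 4 * lengthDist ℓ x y := by
  calc lengthDist ℓ s t ≤ lengthDist ℓ x s + lengthDist ℓ x t := by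
        rw [hℓ.lengthDist_comm x s]; exact hℓ.lengthDist_triangle s x t
    _ ≤ 4 * lengthDist ℓ x y := by
        linarith [hℓ.lengthDist_le_two_mul_of_mem_growthC hs,
          hℓ.lengthDist_le_two_mul_of_mem_growthC ht]

end IsLengthFunction

end GrowthC

theorem polynomial_growth_triple_system_general {G : Type*} [Group G] (ℓ : G → ℝ)
    (hℓ : IsLengthFunction ℓ)
    (P : Polynomial ℝ)
    (hgrowth : ∀ r : ℝ, 0 ≤ r → {γ : G | ℓ γ ≤ r}.Finite ∧
      ({γ : G | ℓ γ ≤ r}.ncard : ℝ) ≤ P.eval r) :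
    (∀ γ x y : G, growthC ℓ (γ * x) (γ * y) = (fun t => γ * t) '' growthC ℓ x y) ∧
    (∀ x y z : G, (growthC ℓ x y ∩ growthC ℓ y z ∩ growthC ℓ z x).Nonempty) ∧
    (∀ (x y : G) (r : ℝ), 0 ≤ r →
      (growthC ℓ x y ∩ {t : G | lengthDist ℓ x t ≤ r}).Finite ∧
      ((growthC ℓ x y ∩ {t : G | lengthDist ℓ x t ≤ r}).ncard : ℝ) ≤ 2 * P.eval r) ∧
    (∀ (x y : G) (r : ℝ), lengthDist ℓ x y ≤ r →
      ∀ s ∈ growthC ℓ x y, ∀ t ∈ growthC ℓ x y, lengthDist ℓ s t ≤ 4 * r) := by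
  refine ⟨growthC_mul_mul ℓ, hℓ.growthC_inter_nonempty, fun x y r hr => ?_,
    fun x y r hxy s hs t ht => ?_⟩
  · obtain ⟨hfin, hcard⟩ := hgrowth r hr
    have hball := finite_setOf_lengthDist_le x hfin
    refine ⟨hball.subset Set.inter_subset_right, ?_⟩
    have hP : 0 ≤ P.eval r := (Nat.cast_nonneg _).trans hcard
    calc _ ≤ ({t : G | lengthDist ℓ x t ≤ r}.ncard : ℝ) := by
          exact_mod_cast Set.ncard_le_ncard Set.inter_subset_right hball
      _ = ({γ : G | ℓ γ ≤ r}.ncard : ℝ) := by rw [ncard_setOf_lengthDist_le]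
      _ ≤ 2 * P.eval r := by linarith
  · exact (hℓ.lengthDist_le_four_mul_of_mem_growthC hs ht).trans (by linarith)

/-- For a group `G` of polynomial growth with a length function `ℓ`
vanishing only at `e`, the map `C(x,y) = B̄(x,d(x,y)) ∪ B̄(y,d(x,y))` is `G`-equivariant
and satisfies: (i) triple intersections are nonempty, (ii) `C(x,y) ∩ B̄(x,r)` is finite
with at most `2·P(r)` points, and (iii) `d(x,y) ≤ r` implies `diam C(x,y) ≤ 4r`. -/
theorem polynomial_growth_triple_system {G : Type*} [Group G] (ℓ : G → ℝ)
    (hℓ : IsLengthFunction ℓ) (hpos : ∀ γ : G, ℓ γ = 0 → γ = 1)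
    (P : Polynomial ℝ)
    (hgrowth : ∀ r : ℝ, 0 ≤ r → {γ : G | ℓ γ ≤ r}.Finite ∧
      ({γ : G | ℓ γ ≤ r}.ncard : ℝ) ≤ P.eval r) :
    (∀ γ x y : G, growthC ℓ (γ * x) (γ * y) = (fun t => γ * t) '' growthC ℓ x y) ∧
    (∀ x y z : G, (growthC ℓ x y ∩ growthC ℓ y z ∩ growthC ℓ z x).Nonempty) ∧
    (∀ (x y : G) (r : ℝ), 0 ≤ r →
      (growthC ℓ x y ∩ {t : G | lengthDist ℓ x t ≤ r}).Finite ∧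
      ((growthC ℓ x y ∩ {t : G | lengthDist ℓ x t ≤ r}).ncard : ℝ) ≤ 2 * P.eval r) ∧
    (∀ (x y : G) (r : ℝ), lengthDist ℓ x y ≤ r →
      ∀ s ∈ growthC ℓ x y, ∀ t ∈ growthC ℓ x y, lengthDist ℓ s t ≤ 4 * r) :=
  polynomial_growth_triple_system_general ℓ hℓ P hgrowth
end
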